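/- Continuous Gronwall inequality with weakly singular kernel: let I = [0,1], g : I → ℝ continuous and nondecreasing, 0 < γ < 1, b > 0, and let H : I → ℝ be continuous and nonnegative with H(t) ≤ g(t) + b ∫₀ᵗ (t-s)^(-γ) H(s) ds for all t ∈ I. Then H(t) ≤ E_{1-γ}(Γ(1-γ) t^(1-γ) b) · g(t) for all t ∈ I. -/

import Mathlib

/-!
Put `α = 1 - γ` and `Φ(t) = E_α(Γ(α) b t^α)`. Integrating the Mittag-Leffler series term by
term against the Beta integral gives `b ∫₀ᵗ (t - s)^(α-1) Φ(s) ds = Φ(t) - 1`. So if `G` is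
nondecreasing, `H < Φ G` on `[0, T)` and `H(T) < G(T) + b ∫₀ᵀ (T - s)^(α-1) H(s) ds`, then
`H(T) < G(T) + G(T) (Φ(T) - 1) = Φ(T) G(T)`. A first-crossing argument with `G = g + ε` gives
`H < Φ (g + ε)` on `[0, 1]` for every `ε > 0`; let `ε → 0`.
-/

open Real MeasureTheory

/-- The Mittag-Leffler function `E_a(x) = ∑_{k≥0} x^k / Γ(a k + 1)`. -/
noncomputable def mittagLeffler (a x : ℝ) : ℝ := ∑' k : ℕ, x ^ k / Real.Gamma (a * k + 1)

open Set Filter Topology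

theorem lt_on_Icc_of_lt_on_Ico {α β : Type*} [ConditionallyCompleteLinearOrder α]
    [TopologicalSpace α] [OrderTopology α] [LinearOrder β] [TopologicalSpace β]
    [OrderClosedTopology β] {f h : α → β} {a b : α}
    (hf : ContinuousOn f (Icc a b)) (hh : ContinuousOn h (Icc a b))
    (step : ∀ T ∈ Icc a b, (∀ s ∈ Ico a T, f s < h s) → f T < h T) :
    ∀ t ∈ Icc a b, f t < h t := by
  by_contra! hex
  obtain ⟨T, ⟨hT, hfT⟩, hleast⟩ :=
    (isCompact_Icc.of_isClosed_subset (isClosed_Icc.isClosed_le hh hf)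
      (sep_subset _ _)).exists_isLeast hex
  refine (step T hT fun s hs => ?_).not_ge hfT
  by_contra! hs'
  exact (hleast ⟨⟨hs.1, hs.2.le.trans hT.2⟩, hs'⟩).not_gt hs.2

theorem rpow_mul_exp_le_Gamma_add_one {A y : ℝ} (hA : 0 < A) (hy : 0 ≤ y) :
    A ^ y * A * exp (-(2 * A)) ≤ Gamma (y + 1) := by
  rw [Gamma_eq_integral (by linarith), add_sub_cancel_right]
  have hint : IntegrableOn (fun x : ℝ => exp (-x) * x ^ y) (Ioi 0) := by
    simpa using GammaIntegral_convergent (s := y + 1) (by linarith)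
  have hsub : Ioc A (2 * A) ⊆ Ioi 0 := fun x hx => hA.trans hx.1
  have hvol : volume.real (Ioc A (2 * A)) = A := by
    rw [Real.volume_real_Ioc_of_le (by linarith)]; ring
  have hlower := setIntegral_ge_of_const_le_real (c := exp (-(2 * A)) * A ^ y)
    measurableSet_Ioc (by simp)
    (fun x (hx : x ∈ Ioc A (2 * A)) =>
      mul_le_mul (exp_le_exp.mpr (neg_le_neg hx.2)) (rpow_le_rpow hA.le hx.1.le hy)
        (rpow_nonneg hA.le y) (exp_pos _).le)
    (hint.mono_set hsub)
  have hmono : ∫ x in Ioc A (2 * A), exp (-x) * x ^ y ≤ ∫ x in Ioi 0, exp (-x) * x ^ y :=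
    setIntegral_mono_set hint
      ((ae_restrict_iff' measurableSet_Ioi).mpr (.of_forall fun x hx =>
        mul_nonneg (exp_pos _).le (rpow_nonneg (le_of_lt hx) _)))
      hsub.eventuallyLE
  rw [hvol] at hlower
  nlinarith

theorem summable_pow_div_Gamma {a : ℝ} (ha : 0 < a) (x : ℝ) :
    Summable fun k : ℕ => x ^ k / Gamma (a * k + 1) := by
  -- `A ^ a ≥ 2 |x|`, so the Gamma bound dominates the terms by `2⁻ᵏ / K`.
  set A : ℝ := max 1 ((2 * |x|) ^ a⁻¹)
  have hA : 0 < A := one_pos.trans_le (le_max_left _ _)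
  have hAa : 2 * |x| ≤ A ^ a := by
    calc 2 * |x| = ((2 * |x|) ^ a⁻¹) ^ a := (rpow_inv_rpow (by positivity) ha.ne').symm
      _ ≤ A ^ a := rpow_le_rpow (by positivity) (le_max_right _ _) ha.le
  set K : ℝ := A * exp (-(2 * A))
  have hK : 0 < K := by positivity
  refine Summable.of_norm_bounded
    ((summable_geometric_of_lt_one (by norm_num) (by norm_num : (2⁻¹ : ℝ) < 1)).div_const K)
    fun k => ?_
  have hGamma : (A ^ a) ^ k * K ≤ Gamma (a * k + 1) := by
    rw [← rpow_natCast, ← rpow_mul hA.le, ← mul_assoc]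
    exact rpow_mul_exp_le_Gamma_add_one hA (by positivity)
  have hratio : |x| / A ^ a ≤ 2⁻¹ := by
    rw [div_le_iff₀ (by positivity)]; linarith
  rw [norm_div, norm_pow, Real.norm_eq_abs,
    Real.norm_of_nonneg (Gamma_pos_of_pos (by positivity)).le]
  calc |x| ^ k / Gamma (a * k + 1) ≤ |x| ^ k / ((A ^ a) ^ k * K) :=
        div_le_div_of_nonneg_left (by positivity) (by positivity) hGamma
    _ = (|x| / A ^ a) ^ k / K := by rw [div_pow, div_div]
    _ ≤ 2⁻¹ ^ k / K := by gcongr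

theorem continuous_mittagLeffler {a : ℝ} (ha : 0 < a) : Continuous (mittagLeffler a) := by
  refine continuous_iff_continuousAt.mpr fun x => ?_
  set R := |x| + 1
  have hcont : ContinuousOn (mittagLeffler a) (Icc (-R) R) := by
    refine continuousOn_tsum (fun k => by fun_prop) (summable_pow_div_Gamma ha R) fun k y hy => ?_
    rw [norm_div, norm_pow, Real.norm_eq_abs,
      Real.norm_of_nonneg (Gamma_pos_of_pos (by positivity)).le]
    gcongr
    exact abs_le.mpr hy
  exact hcont.continuousAt (Icc_mem_nhds (by linarith [neg_abs_le x]) (by linarith [le_abs_self x]))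

theorem mittagLeffler_zero (a : ℝ) : mittagLeffler a 0 = 1 := by
  rw [mittagLeffler, tsum_eq_single 0 fun k hk => by simp [hk]]
  simp

theorem mittagLeffler_nonneg {a x : ℝ} (ha : 0 ≤ a) (hx : 0 ≤ x) : 0 ≤ mittagLeffler a x :=
  tsum_nonneg fun k => div_nonneg (pow_nonneg hx k) (Gamma_pos_of_pos (by positivity)).le

theorem integral_rpow_mul_sub_rpow {p q t : ℝ} (hp : 0 < p) (hq : 0 < q) (ht : 0 < t) :
    ∫ s in (0 : ℝ)..t, s ^ (p - 1) * (t - s) ^ (q - 1)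
      = Gamma p * Gamma q / Gamma (p + q) * t ^ (p + q - 1) := by
  have hbeta := Complex.betaIntegral_scaled p q ht
  rw [Complex.betaIntegral_eq_Gamma_mul_div _ _ (by simpa using hp) (by simpa using hq),
    ← Complex.ofReal_add, Complex.Gamma_ofReal, Complex.Gamma_ofReal, Complex.Gamma_ofReal,
    ← Complex.ofReal_one, ← Complex.ofReal_sub, ← Complex.ofReal_sub, ← Complex.ofReal_sub,
    ← Complex.ofReal_cpow ht.le] at hbeta
  have hreal :
      ∫ x in (0 : ℝ)..t,
        (x : ℂ) ^ ((p - 1 : ℝ) : ℂ) * ((t : ℂ) - x) ^ ((q - 1 : ℝ) : ℂ)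
      = ((∫ s in (0 : ℝ)..t, s ^ (p - 1) * (t - s) ^ (q - 1) : ℝ) : ℂ) := by
    rw [← intervalIntegral.integral_ofReal]
    refine intervalIntegral.integral_congr fun x hx => ?_
    rw [uIcc_of_le ht.le] at hx
    simp only [Complex.ofReal_mul, Complex.ofReal_cpow hx.1,
      Complex.ofReal_cpow (sub_nonneg.mpr hx.2), Complex.ofReal_sub]
  rw [hreal] at hbeta
  norm_cast at hbeta
  rw [hbeta, mul_comm]

theorem intervalIntegrable_sub_rpow_mul {r t : ℝ} (hr : -1 < r) {φ : ℝ → ℝ}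
    (hφ : ContinuousOn φ (uIcc 0 t)) :
    IntervalIntegrable (fun s => (t - s) ^ r * φ s) volume 0 t := by
  refine IntervalIntegrable.mul_continuousOn ?_ hφ
  simpa using
    ((intervalIntegral.intervalIntegrable_rpow' (a := 0) (b := t) hr).comp_sub_left t).symm

theorem mul_integral_sub_rpow_mul_pow {α t : ℝ} (hα : 0 < α) (ht : 0 < t) (lam : ℝ)
    (k : ℕ) :
    lam * ∫ s in (0 : ℝ)..t, (t - s) ^ (α - 1) * ((lam * s ^ α) ^ k / Gamma (α * k + 1))
      = Gamma α * ((lam * t ^ α) ^ (k + 1) / Gamma (α * ↑(k + 1) + 1)) := by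
  have hGk : Gamma (α * k + 1) ≠ 0 := (Gamma_pos_of_pos (by positivity)).ne'
  have hpow : ∀ s, 0 ≤ s → ∀ n : ℕ, (lam * s ^ α) ^ n = lam ^ n * s ^ (α * n) :=
    fun s hs n => by rw [mul_pow, ← rpow_natCast (s ^ α), ← rpow_mul hs]
  have hint : ∫ s in (0 : ℝ)..t, (t - s) ^ (α - 1) * ((lam * s ^ α) ^ k / Gamma (α * k + 1))
      = lam ^ k / Gamma (α * k + 1) *
          ∫ s in (0 : ℝ)..t, s ^ (α * k + 1 - 1) * (t - s) ^ (α - 1) := by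
    rw [← intervalIntegral.integral_const_mul]
    refine intervalIntegral.integral_congr fun s hs => ?_
    rw [uIcc_of_le ht.le] at hs
    simp only [hpow s hs.1, add_sub_cancel_right]
    ring
  rw [hint, integral_rpow_mul_sub_rpow (by positivity) hα ht, hpow t ht.le]
  rw [show α * k + 1 + α = α * ↑(k + 1) + 1 by push_cast; ring, add_sub_cancel_right]
  field_simp
  ring

theorem mul_integral_sub_rpow_mul_mittagLeffler {α t : ℝ} (hα : 0 < α) (ht : 0 ≤ t)
    (lam : ℝ) :
    lam * ∫ s in (0 : ℝ)..t, (t - s) ^ (α - 1) * mittagLeffler α (lam * s ^ α)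
      = Gamma α * (mittagLeffler α (lam * t ^ α) - 1) := by
  rcases ht.eq_or_lt with rfl | ht
  · simp [zero_rpow hα.ne', mittagLeffler_zero]
  set term : ℕ → ℝ → ℝ := fun k x => x ^ k / Gamma (α * k + 1)
  have hterm : ∀ k x, |term k x| = term k |x| := fun k x => by
    simp only [term, abs_div, abs_pow,
      abs_of_pos (Gamma_pos_of_pos (by positivity : 0 < α * k + 1))]
  have hsum : HasSum (fun k => ∫ s in (0 : ℝ)..t, (t - s) ^ (α - 1) * term k (lam * s ^ α))
      (∫ s in (0 : ℝ)..t, (t - s) ^ (α - 1) * mittagLeffler α (lam * s ^ α)) := by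
    refine intervalIntegral.hasSum_integral_of_dominated_convergence
      (fun k s => (t - s) ^ (α - 1) * term k (|lam| * t ^ α))
      (fun k => (by fun_prop : Measurable _).aestronglyMeasurable)
      (fun k => .of_forall fun s hs => ?_)
      (.of_forall fun s _ => (summable_pow_div_Gamma hα _).mul_left _) ?_
      (.of_forall fun s _ => ((summable_pow_div_Gamma hα _).hasSum).mul_left _)
    · rw [uIoc_of_le ht.le] at hs
      have hker : 0 ≤ (t - s) ^ (α - 1) := rpow_nonneg (sub_nonneg.mpr hs.2) _
      rw [Real.norm_eq_abs, abs_mul, abs_of_nonneg hker, hterm]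
      refine mul_le_mul_of_nonneg_left ?_ hker
      refine div_le_div_of_nonneg_right (pow_le_pow_left₀ (abs_nonneg _) ?_ _) (by positivity)
      rw [abs_mul, abs_of_nonneg (rpow_nonneg hs.1.le _)]
      exact mul_le_mul_of_nonneg_left (rpow_le_rpow hs.1.le hs.2 hα.le) (abs_nonneg _)
    · simp_rw [tsum_mul_left]
      exact intervalIntegrable_sub_rpow_mul (by linarith) continuousOn_const
  have hshift :
      HasSum (fun k => term (k + 1) (lam * t ^ α)) (mittagLeffler α (lam * t ^ α) - 1) := by
    simpa [term, mittagLeffler] using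
      (hasSum_nat_add_iff' 1).mpr (summable_pow_div_Gamma hα (lam * t ^ α)).hasSum
  refine (hsum.mul_left lam).unique ?_
  simpa only [term, mul_integral_sub_rpow_mul_pow hα ht] using hshift.mul_left (Gamma α)

theorem lt_mittagLeffler_mul_of_lt_volterra {α b c : ℝ} (hα : 0 < α) (hb : 0 ≤ b)
    {G H : ℝ → ℝ} (hG : ContinuousOn G (Icc 0 c)) (hGmono : MonotoneOn G (Icc 0 c))
    (hH : ContinuousOn H (Icc 0 c))
    (hrec : ∀ t ∈ Icc 0 c, H t < G t + b * ∫ s in (0 : ℝ)..t, (t - s) ^ (α - 1) * H s) :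
    ∀ t ∈ Icc 0 c, H t < mittagLeffler α (Gamma α * b * t ^ α) * G t := by
  set Φ : ℝ → ℝ := fun t => mittagLeffler α (Gamma α * b * t ^ α)
  have hΦ : Continuous Φ := (continuous_mittagLeffler hα).comp
    (continuous_const.mul (continuous_rpow_const hα.le))
  have hΦnonneg : ∀ s, 0 ≤ s → 0 ≤ Φ s := fun s hs =>
    mittagLeffler_nonneg hα.le (by have := Gamma_pos_of_pos hα; positivity)
  have hΦeq :
      ∀ t, 0 ≤ t → b * ∫ s in (0 : ℝ)..t, (t - s) ^ (α - 1) * Φ s = Φ t - 1 := by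
    intro t ht
    have h := mul_integral_sub_rpow_mul_mittagLeffler hα ht (Gamma α * b)
    rw [mul_assoc] at h
    exact mul_left_cancel₀ (Gamma_pos_of_pos hα).ne' h
  refine lt_on_Icc_of_lt_on_Ico hH (hΦ.continuousOn.mul hG) fun T hT hlt => ?_
  have hsub : uIcc 0 T ⊆ Icc 0 c := by rw [uIcc_of_le hT.1]; exact Icc_subset_Icc_right hT.2
  have hmono : ∫ s in (0 : ℝ)..T, (T - s) ^ (α - 1) * H s
      ≤ G T * ∫ s in (0 : ℝ)..T, (T - s) ^ (α - 1) * Φ s := by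
    rw [← intervalIntegral.integral_const_mul]
    refine intervalIntegral.integral_mono_on_of_le_Ioo hT.1
      (intervalIntegrable_sub_rpow_mul (by linarith) (hH.mono hsub))
      ((intervalIntegrable_sub_rpow_mul (by linarith) hΦ.continuousOn).const_mul _)
      fun s hs => ?_
    have hs' : s ∈ Icc 0 c := ⟨hs.1.le, hs.2.le.trans hT.2⟩
    calc (T - s) ^ (α - 1) * H s ≤ (T - s) ^ (α - 1) * (Φ s * G T) := by
          refine mul_le_mul_of_nonneg_left ?_ (rpow_nonneg (sub_nonneg.mpr hs.2.le) _)
          exact (hlt s ⟨hs.1.le, hs.2⟩).le.trans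
            (mul_le_mul_of_nonneg_left (hGmono hs' hT hs.2.le) (hΦnonneg s hs.1.le))
      _ = G T * ((T - s) ^ (α - 1) * Φ s) := by ring
  calc H T < G T + b * ∫ s in (0 : ℝ)..T, (T - s) ^ (α - 1) * H s := hrec T hT
    _ ≤ G T + G T * (b * ∫ s in (0 : ℝ)..T, (T - s) ^ (α - 1) * Φ s) := by
        nlinarith [mul_le_mul_of_nonneg_left hmono hb]
    _ = Φ T * G T := by rw [hΦeq T hT.1]; ring

theorem stmt_5_general (γ b : ℝ) (hγ1 : γ < 1) (hb : 0 < b)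
    (g H : ℝ → ℝ)
    (hg : ContinuousOn g (Set.Icc 0 1))
    (hgmono : ∀ s ∈ Set.Icc (0:ℝ) 1, ∀ t ∈ Set.Icc (0:ℝ) 1, s ≤ t → g s ≤ g t)
    (hH : ContinuousOn H (Set.Icc 0 1))
    (hrec : ∀ t ∈ Set.Icc (0:ℝ) 1, H t ≤ g t + b * ∫ s in (0:ℝ)..t, (t - s) ^ (-γ) * H s) :
    ∀ t ∈ Set.Icc (0:ℝ) 1,
      H t ≤ mittagLeffler (1 - γ) (Real.Gamma (1 - γ) * t ^ (1 - γ) * b) * g t := by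
  intro t ht
  rw [mul_right_comm]
  set Φt := mittagLeffler (1 - γ) (Gamma (1 - γ) * b * t ^ (1 - γ))
  have hε : ∀ ε > 0, H t < Φt * (g t + ε) := fun ε hε =>
    lt_mittagLeffler_mul_of_lt_volterra (G := fun u => g u + ε) (by linarith) hb.le
      (hg.add continuousOn_const) (fun s hs u hu hsu => by simpa using hgmono s hs u hu hsu) hH
      (fun u hu => by
        have h := hrec u hu
        rw [show -γ = 1 - γ - 1 by ring] at h
        linarith) t ht
  have hlim : Tendsto (fun ε => Φt * (g t + ε)) (𝓝[>] 0) (𝓝 (Φt * g t)) :=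
    (Continuous.tendsto' (by fun_prop) 0 _ (by simp)).mono_left nhdsWithin_le_nhds
  exact ge_of_tendsto hlim (eventually_nhdsWithin_of_forall fun ε hε' => (hε ε hε').le)

theorem stmt_5 (γ b : ℝ) (hγ0 : 0 < γ) (hγ1 : γ < 1) (hb : 0 < b)
    (g H : ℝ → ℝ)
    (hg : ContinuousOn g (Set.Icc 0 1))
    (hgmono : ∀ s ∈ Set.Icc (0:ℝ) 1, ∀ t ∈ Set.Icc (0:ℝ) 1, s ≤ t → g s ≤ g t)
    (hH : ContinuousOn H (Set.Icc 0 1))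
    (hHpos : ∀ t ∈ Set.Icc (0:ℝ) 1, 0 ≤ H t)
    (hrec : ∀ t ∈ Set.Icc (0:ℝ) 1, H t ≤ g t + b * ∫ s in (0:ℝ)..t, (t - s) ^ (-γ) * H s) :
    ∀ t ∈ Set.Icc (0:ℝ) 1,
      H t ≤ mittagLeffler (1 - γ) (Real.Gamma (1 - γ) * t ^ (1 - γ) * b) * g t :=
  stmt_5_general γ b hγ1 hb g H hg hgmono hH hrec
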